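/- Let χ be a primitive Dirichlet character mod q, let d be a positive integer with q | d, and let s be a complex number with Re s > 1. Then the series Σ_{r≥1} c_d(r,χ) r^{−s} converges absolutely and equals conj(G(χ̄)) · L(s, χ̄) · (q/d)^{s−1} · Σ_{n | d/q} μ(n) χ(n) n^{s−1}, where c_d(r,χ) := Σ_{1≤c≤d, gcd(c,d)=1} χ(c) e_d(−cr). -/

import Mathlib

open Complex MeasureTheory Filter Topology

noncomputable section

/-- `e_d(c) = exp(2πi c/d)`. -/
def eC (d : ℕ) (c : ℤ) : ℂ := Complex.exp (2 * Real.pi * Complex.I * c / d)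

/-- The conjugate Dirichlet character. -/
def conjChar {q : ℕ} (χ : DirichletCharacter ℂ q) : DirichletCharacter ℂ q :=
  χ.ringHomComp (starRingEnd ℂ)

/-- Gauss sum `G(χ) = Σ_{m=1}^{q} χ(m) e_q(m)` (here summed over `m < q`, which is the same). -/
def gaussC {q : ℕ} (χ : DirichletCharacter ℂ q) : ℂ :=
  ∑ m ∈ Finset.range q, χ (m : ZMod q) * eC q m

/-- `f_{α,β}(n,χ) = Σ_{n₁n₂=n} n₁^{-α} n₂^{-β} χ(n₂)`. -/
def fab {q : ℕ} (χ : DirichletCharacter ℂ q) (α β : ℂ) (n : ℕ) : ℂ :=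
  ∑ d ∈ n.divisors, ((n / d : ℕ) : ℂ) ^ (-α) * (d : ℂ) ^ (-β) * χ (d : ZMod q)

/-- `σ_{α,β}(n) = Σ_{n₁n₂=n} n₁^{-α} n₂^{-β}`. -/
def sigmaab (α β : ℂ) (n : ℕ) : ℂ :=
  ∑ d ∈ n.divisors, ((n / d : ℕ) : ℂ) ^ (-α) * (d : ℂ) ^ (-β)

/-- the `q`-part `n(q)` of `n`. -/
def qPart (q n : ℕ) : ℕ := ∏ p ∈ n.primeFactors.filter (· ∣ q), p ^ (n.factorization p)

/-- local Euler factor quotient `B_{α,β,γ,δ,h}(s)`, with `χ₁` attached to `(α,β)` and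
`χ₂` attached to `(γ,δ)` (the shifted one). -/
def Bh {q : ℕ} (χ₁ χ₂ : DirichletCharacter ℂ q) (α β γ δ : ℂ) (h : ℕ) (s : ℂ) : ℂ :=
  ∏ p ∈ h.primeFactors,
    (∑' j : ℕ, fab χ₁ α β (p ^ j) * fab χ₂ γ δ (p ^ (h.factorization p + j)) *
        (p : ℂ) ^ (-((j : ℂ) * (1 + s)))) /
    (∑' j : ℕ, fab χ₁ α β (p ^ j) * fab χ₂ γ δ (p ^ j) * (p : ℂ) ^ (-((j : ℂ) * (1 + s))))

/-- `B_{α,β,γ,δ,h,k}(s) = B_{α,β,γ,δ,h}(s,χ̄) B_{γ,δ,α,β,k}(s,χ)`. -/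
def Bfull {q : ℕ} (χ : DirichletCharacter ℂ q) (α β γ δ : ℂ) (h k : ℕ) (s : ℂ) : ℂ :=
  Bh χ (conjChar χ) α β γ δ h s * Bh (conjChar χ) χ γ δ α β k s

/-- `A_{α,β,γ,δ}(s)`. -/
def Az {q : ℕ} [NeZero q] (χ : DirichletCharacter ℂ q) (α β γ δ : ℂ) (s : ℂ) : ℂ :=
  riemannZeta (1 + α + γ + s) * riemannZeta (1 + β + δ + s) *
    DirichletCharacter.LFunction χ (1 + β + γ + s) *
    DirichletCharacter.LFunction (conjChar χ) (1 + α + δ + s) /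
    riemannZeta (2 + α + β + γ + δ + 2 * s) *
    ∏ p ∈ q.primeFactors,
      (1 - (p : ℂ) ^ (-1 - s - β - δ)) / (1 - (p : ℂ) ^ (-2 - 2 * s - α - β - γ - δ))

/-- `Z_{α,β,γ,δ,h,k}(s) = A_{α,β,γ,δ}(s) B_{α,β,γ,δ,h,k}(s)`. -/
def Zfull {q : ℕ} [NeZero q] (χ : DirichletCharacter ℂ q) (α β γ δ : ℂ) (h k : ℕ) (s : ℂ) : ℂ :=
  Az χ α β γ δ s * Bfull χ α β γ δ h k s

/-- `A′_{α,β,γ,δ}(s,χ)`. -/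
def A'z {q : ℕ} [NeZero q] (χ : DirichletCharacter ℂ q) (α β γ δ : ℂ) (s : ℂ) : ℂ :=
  DirichletCharacter.LFunction χ (1 + α + γ + s) * DirichletCharacter.LFunction χ (1 + β + δ + s) *
    DirichletCharacter.LFunction χ (1 + α + δ + s) * DirichletCharacter.LFunction χ (1 + β + γ + s) /
    DirichletCharacter.LFunction (χ ^ 2) (2 + α + β + γ + δ + 2 * s)

/-- `B′_{α,β,γ,δ,h}(s,χ)`. -/
def B'h {q : ℕ} (χ : DirichletCharacter ℂ q) (α β γ δ : ℂ) (h : ℕ) (s : ℂ) : ℂ :=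
  ∏ p ∈ h.primeFactors,
    (∑' j : ℕ, (χ (p : ZMod q)) ^ j * sigmaab α β (p ^ j) * sigmaab γ δ (p ^ (h.factorization p + j)) *
        (p : ℂ) ^ (-((j : ℂ) * (1 + s)))) /
    (∑' j : ℕ, (χ (p : ZMod q)) ^ j * sigmaab α β (p ^ j) * sigmaab γ δ (p ^ j) *
        (p : ℂ) ^ (-((j : ℂ) * (1 + s))))

/-- `B′_{α,β,γ,δ,h,k}(s,χ) = B′_{α,β,γ,δ,h}(s,χ) B′_{γ,δ,α,β,k}(s,χ)`. -/
def B'full {q : ℕ} (χ : DirichletCharacter ℂ q) (α β γ δ : ℂ) (h k : ℕ) (s : ℂ) : ℂ :=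
  B'h χ α β γ δ h s * B'h χ γ δ α β k s

/-- `Z′_{α,β,γ,δ,h,k}(s,χ) = conj(G(χ)) A′_{α,β,γ,δ}(s,χ) B′_{α,β,γ,δ,h,k}(s,χ)`. -/
def Z'full {q : ℕ} [NeZero q] (χ : DirichletCharacter ℂ q) (α β γ δ : ℂ) (h k : ℕ) (s : ℂ) : ℂ :=
  (starRingEnd ℂ) (gaussC χ) * A'z χ α β γ δ s * B'full χ α β γ δ h k s

/-- `𝔞 = 0` if `χ(-1) = 1`, else `1`. -/
def frakA {q : ℕ} (χ : DirichletCharacter ℂ q) : ℕ := if χ (-1) = 1 then 0 else 1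

/-- the Gamma-factor ratio `g_{α,β,γ,δ}(s,t)`. -/
def gfun {q : ℕ} (χ : DirichletCharacter ℂ q) (α β γ δ : ℂ) (s : ℂ) (t : ℝ) : ℂ :=
  (Complex.Gamma ((1 / 2 + α + s + Complex.I * t) / 2) *
      Complex.Gamma ((1 / 2 + β + s + Complex.I * t + (frakA χ : ℂ)) / 2) *
      Complex.Gamma ((1 / 2 + γ + s - Complex.I * t) / 2) *
      Complex.Gamma ((1 / 2 + δ + s - Complex.I * t + (frakA χ : ℂ)) / 2)) /
    (Complex.Gamma ((1 / 2 + α + Complex.I * t) / 2) *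
      Complex.Gamma ((1 / 2 + β + Complex.I * t + (frakA χ : ℂ)) / 2) *
      Complex.Gamma ((1 / 2 + γ - Complex.I * t) / 2) *
      Complex.Gamma ((1 / 2 + δ - Complex.I * t + (frakA χ : ℂ)) / 2))

/-- `X_{α,β,γ,δ,t}`. -/
def Xfun {q : ℕ} (χ : DirichletCharacter ℂ q) (α β γ δ : ℂ) (t : ℝ) : ℂ :=
  (Real.pi : ℂ) ^ (α + β + γ + δ) * (q : ℂ) ^ (-β - δ) *
    (Complex.Gamma ((1 / 2 - α - Complex.I * t) / 2) *
      Complex.Gamma ((1 / 2 - β - Complex.I * t + (frakA χ : ℂ)) / 2) *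
      Complex.Gamma ((1 / 2 - γ + Complex.I * t) / 2) *
      Complex.Gamma ((1 / 2 - δ + Complex.I * t + (frakA χ : ℂ)) / 2)) /
    (Complex.Gamma ((1 / 2 + α + Complex.I * t) / 2) *
      Complex.Gamma ((1 / 2 + β + Complex.I * t + (frakA χ : ℂ)) / 2) *
      Complex.Gamma ((1 / 2 + γ - Complex.I * t) / 2) *
      Complex.Gamma ((1 / 2 + δ - Complex.I * t + (frakA χ : ℂ)) / 2))

/-- `V_{α,β,γ,δ,t}(x)`, as the contour integral along `Re s = 1`. -/
def Vfun {q : ℕ} (χ : DirichletCharacter ℂ q) (α β γ δ : ℂ) (G : ℂ → ℂ) (t : ℝ) (x : ℝ) : ℂ :=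
  (1 / (2 * Real.pi)) *
    ∫ u : ℝ, G (1 + Complex.I * u) / (1 + Complex.I * u) *
      gfun χ α β γ δ (1 + Complex.I * u) t * (x : ℂ) ^ (-(1 + Complex.I * u))

/-- the Ramanujan sum `c_d(r)`. -/
def cdR (d r : ℕ) : ℂ :=
  ∑ c ∈ (Finset.Icc 1 d).filter (fun c => Nat.gcd c d = 1), eC d (c * r)

/-- the twisted Ramanujan-type sum `c_d(r,χ) = Σ_{(c,d)=1} χ(c) e_d(-cr)`. -/
def cdChi {q : ℕ} (χ : DirichletCharacter ℂ q) (d r : ℕ) : ℂ :=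
  ∑ c ∈ (Finset.Icc 1 d).filter (fun c => Nat.gcd c d = 1),
    χ (c : ZMod q) * eC d (-((c : ℤ) * r))

/-- `σ_{α,β}(n, a/d, χ)`. -/
def sigmaE {q : ℕ} (χ : DirichletCharacter ℂ q) (α β : ℂ) (d : ℕ) (a : ℤ) (n : ℕ) : ℂ :=
  ∑ u ∈ n.divisors, (u : ℂ) ^ (-α) * ((n / u : ℕ) : ℂ) ^ (-β) *
    ∑ b ∈ Finset.Icc 1 (Nat.lcm d q),
      if ((b : ℕ) : ZMod d) = ((a * u : ℤ) : ZMod d)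
      then χ (b : ZMod q) * eC (Nat.lcm d q) b else 0

/-- local factor `C_{11,α,β,γ,δ,h}(s,ψ)`. -/
def C11h {q : ℕ} (ψ : DirichletCharacter ℂ q) (α β γ δ : ℂ) (h : ℕ) (s : ℂ) : ℂ :=
  ∏ p ∈ h.primeFactors.filter (fun p => ¬ p ∣ q),
    (let m : ℕ := h.factorization p
     ((1 - ψ (p : ZMod q) ^ (m + 1) * (p : ℂ) ^ (-(((m : ℂ) + 1) * (α + δ + 2 * s))))
      - (p : ℂ) ^ (-1 : ℂ) *
        ((ψ (p : ZMod q) * (p : ℂ) ^ (γ - δ) + (p : ℂ) ^ (-β - δ - 2 * s)) *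
          (1 - ψ (p : ZMod q) ^ m * (p : ℂ) ^ (-((m : ℂ) * (α + δ + 2 * s)))))
      + (p : ℂ) ^ (-2 : ℂ) *
        (ψ (p : ZMod q) * (p : ℂ) ^ (-β + γ - 2 * δ - 2 * s)
          - ψ (p : ZMod q) ^ m * (p : ℂ) ^ (-((m : ℂ) * (α + δ + 2 * s))) * (p : ℂ) ^ (α - β + γ - δ))) /
     ((1 - ψ (p : ZMod q) * (p : ℂ) ^ (-α - δ - 2 * s)) * (1 - (p : ℂ) ^ (-2 + α - β + γ - δ))))

/-- `C_{11,α,β,γ,δ,h,k}(s)`. -/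
def C11full {q : ℕ} (χ : DirichletCharacter ℂ q) (α β γ δ : ℂ) (h k : ℕ) (s : ℂ) : ℂ :=
  C11h (conjChar χ) α β γ δ h s * C11h χ γ δ α β k s

/-- local factor `C_{22,α,β,γ,δ,h}(s,ψ)`. -/
def C22h {q : ℕ} (ψ : DirichletCharacter ℂ q) (α β γ δ : ℂ) (h : ℕ) (s : ℂ) : ℂ :=
  ∏ p ∈ h.primeFactors.filter (fun p => ¬ p ∣ q),
    (let m : ℕ := h.factorization p
     (((p : ℂ) ^ (-((m : ℂ) * (β + γ + 2 * s))) - ψ (p : ZMod q) ^ (m + 1) * (p : ℂ) ^ (β + γ + 2 * s))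
      - (p : ℂ) ^ (-1 : ℂ) *
        (((p : ℂ) ^ (-((m : ℂ) * (β + γ + 2 * s))) - ψ (p : ZMod q) ^ m) *
          ((p : ℂ) ^ (β + δ + 2 * s) + ψ (p : ZMod q) * (p : ℂ) ^ (-α + β)))
      + (p : ℂ) ^ (-2 : ℂ) *
        ((p : ℂ) ^ (-((m : ℂ) * (β + γ + 2 * s))) * ψ (p : ZMod q) * (p : ℂ) ^ (-α + 2 * β + δ + 2 * s)
          - ψ (p : ZMod q) ^ m * (p : ℂ) ^ (-α + β - γ + δ))) /
     ((1 - ψ (p : ZMod q) * (p : ℂ) ^ (β + γ + 2 * s)) * (1 - (p : ℂ) ^ (-2 - α + β - γ + δ))))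

/-- `C_{22,α,β,γ,δ,h,k}(s)`. -/
def C22full {q : ℕ} (χ : DirichletCharacter ℂ q) (α β γ δ : ℂ) (h k : ℕ) (s : ℂ) : ℂ :=
  (qPart q h : ℂ) ^ (-β - γ - 2 * s) * (qPart q k : ℂ) ^ (-α - δ - 2 * s) *
    C22h (conjChar χ) α β γ δ h s * C22h χ γ δ α β k s

/-- local factor `C_{12,α,β,γ,δ,h}(s)`. -/
def C12h {q : ℕ} (χ : DirichletCharacter ℂ q) (α β γ δ : ℂ) (h : ℕ) (s : ℂ) : ℂ :=
  ∏ p ∈ h.primeFactors.filter (fun p => ¬ p ∣ q),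
    (let m : ℕ := h.factorization p
     ((1 - (p : ℂ) ^ (-(((m : ℂ) + 1) * (α + γ + 2 * s))))
      - (p : ℂ) ^ (-1 : ℂ) *
        (χ (p : ZMod q) * ((p : ℂ) ^ (δ - γ) + (p : ℂ) ^ (-β - γ - 2 * s)) *
          (1 - (p : ℂ) ^ (-((m : ℂ) * (α + γ + 2 * s)))))
      + (p : ℂ) ^ (-2 : ℂ) *
        (χ (p : ZMod q) ^ 2 * (p : ℂ) ^ (δ - β) *
          ((p : ℂ) ^ (-(2 * (γ + s))) - (p : ℂ) ^ (2 * (α + s)) * (p : ℂ) ^ (-(((m : ℂ) + 1) * (α + γ + 2 * s)))))) /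
     ((1 - (p : ℂ) ^ (-α - γ - 2 * s)) * (1 - χ (p : ZMod q) ^ 2 * (p : ℂ) ^ (-2 + α - β - γ + δ))))

/-- `C_{12,α,β,γ,δ,h,k}(s) = C_{12,α,β,γ,δ,h}(s) C_{12,δ,γ,β,α,k}(s)`. -/
def C12full {q : ℕ} (χ : DirichletCharacter ℂ q) (α β γ δ : ℂ) (h k : ℕ) (s : ℂ) : ℂ :=
  C12h χ α β γ δ h s * C12h χ δ γ β α k s

end

lemma eC_eq {N : ℕ} [NeZero N] (j : ℤ) : eC N j = ZMod.stdAddChar (j : ZMod N) :=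
  (ZMod.stdAddChar_coe j).symm

lemma conjChar_apply {q : ℕ} (χ : DirichletCharacter ℂ q) (a : ZMod q) :
    conjChar χ a = (starRingEnd ℂ) (χ a) := rfl

lemma conjChar_eq_inv {q : ℕ} [NeZero q] (χ : DirichletCharacter ℂ q) (a : ZMod q) :
    conjChar χ a = χ⁻¹ a := by
  rw [MulChar.inv_apply_eq_inv, Ring.inverse_eq_inv', conjChar_apply]
  by_cases h : IsUnit a
  · exact (Complex.inv_eq_conj (by simpa using χ.unit_norm_eq_one h.unit)).symm ▸ rfl
  · rw [χ.map_nonunit h]; simp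

lemma sum_range_zmod {N : ℕ} [NeZero N] (f : ZMod N → ℂ) :
    ∑ m ∈ Finset.range N, f (m : ZMod N) = ∑ x : ZMod N, f x := by
  refine Finset.sum_nbij' (fun m => (m : ZMod N)) (fun x => x.val) ?_ ?_ ?_ ?_ ?_ <;>
    simp +contextual [ZMod.val_cast_of_lt, ZMod.natCast_zmod_val, ZMod.val_lt,
      Finset.mem_range, Nat.mod_eq_of_lt]

lemma gauss_shift {q : ℕ} [NeZero q] {χ : DirichletCharacter ℂ q} (hχ : χ.IsPrimitive)
    (b : ZMod q) :
    ∑ x : ZMod q, χ x * ZMod.stdAddChar (b * x)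
      = conjChar χ b * gaussSum χ ZMod.stdAddChar := by
  have h := gaussSum_mulShift_of_isPrimitive ZMod.stdAddChar hχ b
  rw [conjChar_eq_inv, ← h]
  simp only [gaussSum, AddChar.mulShift_apply, mul_comm b]

lemma gaussC_eq {q : ℕ} [NeZero q] (χ : DirichletCharacter ℂ q) :
    gaussC χ = gaussSum χ ZMod.stdAddChar := by
  rw [gaussC, gaussSum, ← sum_range_zmod (fun x => χ x * ZMod.stdAddChar x)]
  refine Finset.sum_congr rfl fun m _ => ?_
  rw [eC_eq]
  push_cast
  rfl

lemma conj_eC {N : ℕ} (j : ℤ) : (starRingEnd ℂ) (eC N j) = eC N (-j) := by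
  rw [eC, eC, ← Complex.exp_conj]
  congr 1
  simp [map_div₀, Complex.conj_ofReal, map_ofNat]

lemma K_eq {q : ℕ} [NeZero q] {χ : DirichletCharacter ℂ q} (hχ : χ.IsPrimitive) :
    (starRingEnd ℂ) (gaussC (conjChar χ)) = conjChar χ (-1) * gaussSum χ ZMod.stdAddChar := by
  rw [← gauss_shift hχ (-1 : ZMod q), gaussC, map_sum,
    ← sum_range_zmod (fun x : ZMod q => χ x * ZMod.stdAddChar ((-1) * x))]
  refine Finset.sum_congr rfl fun m _ => ?_
  rw [map_mul, conjChar_apply, Complex.conj_conj, conj_eC]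
  congr 1
  rw [eC_eq]
  push_cast
  ring_nf

lemma eC_add (N : ℕ) (x y : ℤ) : eC N (x + y) = eC N x * eC N y := by
  rw [eC, eC, eC, ← Complex.exp_add]
  congr 1
  push_cast
  ring

lemma eC_mul_left {qq M : ℕ} (hq : qq ≠ 0) (z : ℤ) : eC (qq * M) (qq * z) = eC M z := by
  rw [eC, eC]
  congr 1
  push_cast
  rcases eq_or_ne M 0 with h | h
  · simp [h]
  · have hq' : (qq : ℂ) ≠ 0 := Nat.cast_ne_zero.mpr hq
    have hM' : (M : ℂ) ≠ 0 := Nat.cast_ne_zero.mpr h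
    field_simp

/-- geometric sum of roots of unity -/

lemma geom_eC {M : ℕ} (hM : 0 < M) (r : ℕ) :
    ∑ b ∈ Finset.range M, eC M (-((b : ℤ) * r)) = if M ∣ r then (M : ℂ) else 0 := by
  haveI : NeZero M := ⟨hM.ne'⟩
  have h1 : ∀ b ∈ Finset.range M, eC M (-((b : ℤ) * r))
      = (fun x : ZMod M => ZMod.stdAddChar (x * ((-(r : ℤ) : ℤ) : ZMod M))) (b : ZMod M) := by
    intro b _
    rw [eC_eq]
    push_cast
    ring_nf
  rw [Finset.sum_congr rfl h1,
    sum_range_zmod (fun x : ZMod M => ZMod.stdAddChar (x * ((-(r : ℤ) : ℤ) : ZMod M))),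
    AddChar.sum_mulShift _ (ZMod.isPrimitive_stdAddChar M)]
  have : (((-(r : ℤ)) : ℤ) : ZMod M) = 0 ↔ M ∣ r := by
    rw [ZMod.intCast_zmod_eq_zero_iff_dvd, dvd_neg, Int.natCast_dvd_natCast]
  split_ifs with h2 h3 h3
  · simp [ZMod.card]
  · exact absurd (this.mp h2) h3
  · exact absurd (this.mpr h3) h2
  · exact Nat.cast_zero

lemma sum_range_mul_decomp {qq M : ℕ} (hq : 0 < qq) (f : ℕ → ℂ) :
    ∑ c ∈ Finset.range (qq * M), f c
      = ∑ a ∈ Finset.range qq, ∑ b ∈ Finset.range M, f (a + qq * b) := by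
  rw [← Finset.sum_product']
  refine (Finset.sum_nbij' (fun p : ℕ × ℕ => p.1 + qq * p.2) (fun c => (c % qq, c / qq))
    ?_ ?_ ?_ ?_ ?_).symm
  · rintro ⟨a, b⟩ hab
    simp only [Finset.mem_product, Finset.mem_range] at hab ⊢
    calc a + qq * b < qq + qq * b := by omega
    _ = qq * (b + 1) := by ring
    _ ≤ qq * M := Nat.mul_le_mul_left _ (by omega)
  · intro c hc
    simp only [Finset.mem_range] at hc
    simp only [Finset.mem_product, Finset.mem_range]
    exact ⟨Nat.mod_lt _ hq, (Nat.div_lt_iff_lt_mul hq).mpr (by rwa [mul_comm M qq])⟩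
  · rintro ⟨a, b⟩ hab
    simp only [Finset.mem_product, Finset.mem_range] at hab
    have h1 : (a + qq * b) % qq = a := by
      rw [Nat.add_mul_mod_self_left, Nat.mod_eq_of_lt hab.1]
    have h2 : (a + qq * b) / qq = b := by
      rw [Nat.add_mul_div_left _ _ hq, Nat.div_eq_of_lt hab.1, zero_add]
    simp [h1, h2]
  · intro c _
    exact Nat.mod_add_div c qq
  · intro p _
    rfl

lemma T_eval {q : ℕ} [NeZero q] {χ : DirichletCharacter ℂ q} (hχ : χ.IsPrimitive)
    {N : ℕ} (hN : 0 < N) (hqN : q ∣ N) (r : ℕ) :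
    ∑ c ∈ Finset.Icc 1 N, χ (c : ZMod q) * eC N (-((c : ℤ) * r))
      = if N / q ∣ r then ((N / q : ℕ) : ℂ) * conjChar χ ((r / (N / q) : ℕ) : ZMod q) *
          (starRingEnd ℂ) (gaussC (conjChar χ)) else 0 := by
  have hq : 0 < q := Nat.pos_of_ne_zero (NeZero.ne q)
  obtain ⟨M, rfl⟩ := hqN
  have hM : 0 < M := by
    rcases Nat.eq_zero_or_pos M with h | h
    · subst h; simp at hN
    · exact h
  have hMq : q * M / q = M := Nat.mul_div_cancel_left M hq
  set f : ℕ → ℂ := fun c => χ (c : ZMod q) * eC (q * M) (-((c : ℤ) * r)) with hf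
  have hper : f (q * M) = f 0 := by
    simp only [hf]
    congr 1
    · push_cast
      simp [ZMod.natCast_self]
    · haveI : NeZero (q * M) := ⟨by positivity⟩
      rw [eC_eq, eC_eq]
      congr 1
      push_cast
      simp
      rw [show ((q : ZMod (q*M)) * M * r) = (((q * M * r : ℕ) : ZMod (q*M))) by push_cast; ring]
      rw [ZMod.natCast_eq_zero_iff]
      exact ⟨r, rfl⟩
  have hIcc : ∑ c ∈ Finset.Icc 1 (q * M), f c = ∑ c ∈ Finset.range (q * M), f c := by
    have h1 : Finset.Icc 1 (q * M) = Finset.Ico 1 (q * M + 1) := by rw [Finset.Ico_add_one_right_eq_Icc]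
    have h2 : (0 : ℕ) < q * M := by positivity
    rw [h1, Finset.sum_Ico_succ_top (by omega), Finset.range_eq_Ico,
      Finset.sum_eq_sum_Ico_succ_bot h2, hper]
    ring
  rw [show (∑ c ∈ Finset.Icc 1 (q * M), χ (c : ZMod q) * eC (q * M) (-((c : ℤ) * r)))
      = ∑ c ∈ Finset.Icc 1 (q * M), f c from rfl, hIcc, sum_range_mul_decomp hq f]
  have hterm : ∀ a ∈ Finset.range q, ∀ b ∈ Finset.range M,
      f (a + q * b) = χ (a : ZMod q) * eC (q * M) (-((a : ℤ) * r)) * eC M (-((b : ℤ) * r)) := by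
    intro a _ b _
    simp only [hf]
    have hc : ((a + q * b : ℕ) : ZMod q) = (a : ZMod q) := by
      push_cast
      simp [ZMod.natCast_self]
    rw [hc]
    have he : eC (q * M) (-(((a + q * b : ℕ) : ℤ) * r))
        = eC (q * M) (-((a : ℤ) * r)) * eC M (-((b : ℤ) * r)) := by
      rw [show (-(((a + q * b : ℕ) : ℤ) * r)) = (-((a : ℤ) * r)) + (q : ℤ) * (-((b : ℤ) * r)) by
        push_cast; ring, eC_add, eC_mul_left hq.ne']
    rw [he, mul_assoc]
  rw [Finset.sum_congr rfl (fun a ha => Finset.sum_congr rfl (hterm a ha))]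
  have hsplit : ∀ a ∈ Finset.range q,
      ∑ b ∈ Finset.range M, χ (a : ZMod q) * eC (q * M) (-((a : ℤ) * r)) * eC M (-((b : ℤ) * r))
      = χ (a : ZMod q) * eC (q * M) (-((a : ℤ) * r)) * (if M ∣ r then (M : ℂ) else 0) := by
    intro a _
    rw [← Finset.mul_sum, geom_eC hM r]
  rw [Finset.sum_congr rfl hsplit, hMq]
  by_cases hdvd : M ∣ r
  · obtain ⟨m, rfl⟩ := hdvd
    have hm : M * m / M = m := Nat.mul_div_cancel_left m hM
    simp only [if_pos (Dvd.intro m rfl), hm]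
    have hEq : ∀ a ∈ Finset.range q,
        χ (a : ZMod q) * eC (q * M) (-((a : ℤ) * (M * m : ℕ))) * (M : ℂ)
        = (M : ℂ) * (χ (a : ZMod q) * ZMod.stdAddChar ((((-(m : ℤ)) : ℤ) : ZMod q) * (a : ZMod q))) := by
      intro a _
      have : eC (q * M) (-((a : ℤ) * (M * m : ℕ))) = eC q (-((a : ℤ) * m)) := by
        rw [show (q * M) = M * q by ring, show (-((a : ℤ) * (M * m : ℕ))) = (M : ℤ) * (-((a:ℤ) * m)) by push_cast; ring,
          eC_mul_left hM.ne']
      rw [this]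
      haveI : NeZero q := inferInstance
      rw [eC_eq]
      have : ((-((a : ℤ) * m) : ℤ) : ZMod q) = (((-(m : ℤ)) : ℤ) : ZMod q) * (a : ZMod q) := by
        push_cast
        ring
      rw [this]
      ring
    rw [Finset.sum_congr rfl hEq, ← Finset.mul_sum,
      sum_range_zmod (fun x : ZMod q => χ x * ZMod.stdAddChar ((((-(m : ℤ)) : ℤ) : ZMod q) * x)),
      gauss_shift hχ, K_eq hχ]
    have hpsi : conjChar χ ((((-(m : ℤ)) : ℤ) : ZMod q))
        = conjChar χ (-1) * conjChar χ ((m : ℕ) : ZMod q) := by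
      rw [← map_mul]
      congr 1
      push_cast
      ring
    rw [hpsi]
    ring
  · simp only [if_neg hdvd, mul_zero, Finset.sum_const_zero]

lemma moebius_sum (k : ℕ) :
    (∑ n ∈ k.divisors, ((ArithmeticFunction.moebius n : ℤ) : ℂ)) = if k = 1 then 1 else 0 := by
  have h : ((ArithmeticFunction.moebius * ArithmeticFunction.zeta : ArithmeticFunction ℤ)) k
      = (1 : ArithmeticFunction ℤ) k := by
    rw [ArithmeticFunction.moebius_mul_coe_zeta]
  rw [ArithmeticFunction.coe_mul_zeta_apply, ArithmeticFunction.one_apply] at h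
  calc (∑ n ∈ k.divisors, ((ArithmeticFunction.moebius n : ℤ) : ℂ))
      = ((∑ n ∈ k.divisors, (ArithmeticFunction.moebius n : ℤ) : ℤ) : ℂ) := by push_cast; rfl
  _ = if k = 1 then 1 else 0 := by rw [h]; split_ifs <;> simp

lemma chi_ne_zero_coprime {q : ℕ} [NeZero q] {χ : DirichletCharacter ℂ q} {n : ℕ}
    (h : χ (n : ZMod q) ≠ 0) : Nat.Coprime n q := by
  by_contra hco
  exact h (χ.map_nonunit (fun hu => hco ((ZMod.isUnit_iff_coprime n q).mp hu)))

lemma cdChi_eq {q : ℕ} [NeZero q] {χ : DirichletCharacter ℂ q} (hχ : χ.IsPrimitive)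
    {d : ℕ} (hd : 0 < d) (hqd : q ∣ d) (r : ℕ) :
    cdChi χ d r = ∑ n ∈ (d / q).divisors,
      ((ArithmeticFunction.moebius n : ℤ) : ℂ) * χ (n : ZMod q) *
        (if (d / q / n) ∣ r then ((d / q / n : ℕ) : ℂ) *
          conjChar χ ((r / (d / q / n) : ℕ) : ZMod q) *
          (starRingEnd ℂ) (gaussC (conjChar χ)) else 0) := by
  have hq : 0 < q := Nat.pos_of_ne_zero (NeZero.ne q)
  set K : ℂ := (starRingEnd ℂ) (gaussC (conjChar χ)) with hK
  set term : ℕ → ℂ := fun c => χ (c : ZMod q) * eC d (-((c : ℤ) * r)) with hterm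
  -- Step 1/2: Möbius expansion
  have step1 : cdChi χ d r
      = ∑ c ∈ Finset.Icc 1 d, (∑ n ∈ (Nat.gcd c d).divisors,
          ((ArithmeticFunction.moebius n : ℤ) : ℂ)) * term c := by
    rw [cdChi, Finset.sum_filter]
    refine Finset.sum_congr rfl fun c _ => ?_
    rw [moebius_sum]
    by_cases h : Nat.gcd c d = 1 <;> simp [h, hterm]
  -- Step 3: divisors of gcd
  have step3 : ∀ c ∈ Finset.Icc 1 d, (Nat.gcd c d).divisors
      = d.divisors.filter (· ∣ c) := by
    intro c _
    ext n
    simp only [Nat.mem_divisors, Finset.mem_filter]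
    constructor
    · rintro ⟨hdvd, hne⟩
      obtain ⟨h1, h2⟩ := (Nat.dvd_gcd_iff).mp hdvd
      exact ⟨⟨h2, hd.ne'⟩, h1⟩
    · rintro ⟨⟨h2, _⟩, h1⟩
      refine ⟨Nat.dvd_gcd h1 h2, fun hg => ?_⟩
      exact hd.ne' ((Nat.gcd_eq_zero_iff.mp hg).2)
  -- Steps 4/5: swap
  have step5 : cdChi χ d r = ∑ n ∈ d.divisors,
      ∑ c ∈ Finset.Icc 1 d, (if n ∣ c then ((ArithmeticFunction.moebius n : ℤ) : ℂ) * term c else 0) := by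
    rw [step1, Finset.sum_congr rfl (fun c hc => by
      rw [step3 c hc, Finset.sum_filter, Finset.sum_mul]), Finset.sum_comm]
    refine Finset.sum_congr rfl fun c _ => Finset.sum_congr rfl fun n _ => ?_
    by_cases h : n ∣ c <;> simp [h]
  -- Step 6: reindex inner sum
  have step6 : ∀ n ∈ d.divisors,
      (∑ c ∈ Finset.Icc 1 d, if n ∣ c then ((ArithmeticFunction.moebius n : ℤ) : ℂ) * term c else 0)
      = ((ArithmeticFunction.moebius n : ℤ) : ℂ) * χ (n : ZMod q) *
          ∑ c' ∈ Finset.Icc 1 (d / n), χ ((c' : ℕ) : ZMod q) * eC (d / n) (-((c' : ℤ) * r)) := by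
    intro n hn
    obtain ⟨hndvd, -⟩ := Nat.mem_divisors.mp hn
    have hn0 : 0 < n := Nat.pos_of_dvd_of_pos hndvd hd
    rw [← Finset.sum_filter]
    rw [Finset.mul_sum]
    refine Finset.sum_nbij' (fun c => c / n) (fun c' => n * c') ?_ ?_ ?_ ?_ ?_
    · intro c hc
      simp only [Finset.mem_filter, Finset.mem_Icc] at hc ⊢
      obtain ⟨⟨h1, h2⟩, h3⟩ := hc
      exact ⟨Nat.one_le_div_iff hn0 |>.mpr (Nat.le_of_dvd h1 h3), Nat.div_le_div_right h2⟩
    · intro c' hc'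
      simp only [Finset.mem_Icc] at hc'
      simp only [Finset.mem_filter, Finset.mem_Icc]
      refine ⟨⟨Nat.mul_pos hn0 hc'.1, ?_⟩, Dvd.intro c' rfl⟩
      calc n * c' ≤ n * (d / n) := Nat.mul_le_mul_left _ hc'.2
      _ = d := Nat.mul_div_cancel' hndvd
    · intro c hc
      simp only [Finset.mem_filter] at hc
      exact Nat.mul_div_cancel' hc.2
    · intro c' _
      exact Nat.mul_div_cancel_left _ hn0
    · intro c hc
      simp only [Finset.mem_filter, Finset.mem_Icc] at hc
      obtain ⟨⟨h1, h2⟩, h3⟩ := hc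
      obtain ⟨c', rfl⟩ := h3
      simp only [Nat.mul_div_cancel_left _ hn0, hterm]
      have hc : ((n * c' : ℕ) : ZMod q) = (n : ZMod q) * (c' : ZMod q) := by push_cast; ring
      have he : eC d (-(((n * c' : ℕ) : ℤ) * r)) = eC (d / n) (-((c' : ℤ) * r)) := by
        conv_lhs => rw [show d = n * (d / n) from (Nat.mul_div_cancel' hndvd).symm]
        rw [show (-(((n * c' : ℕ) : ℤ) * r)) = (n : ℤ) * (-((c' : ℤ) * r)) by push_cast; ring,
          eC_mul_left hn0.ne']
      rw [hc, he, map_mul]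
      ring
  -- Step 7: apply T_eval
  have hQd : d / q ∣ d := Nat.div_dvd_of_dvd hqd
  have hQ0 : 0 < d / q := Nat.div_pos (Nat.le_of_dvd hd hqd) hq
  set F : ℕ → ℂ := fun n => ((ArithmeticFunction.moebius n : ℤ) : ℂ) * χ (n : ZMod q) *
        (if (d / q / n) ∣ r then ((d / q / n : ℕ) : ℂ) *
          conjChar χ ((r / (d / q / n) : ℕ) : ZMod q) * K else 0) with hF
  have step7 : ∀ n ∈ d.divisors,
      ((ArithmeticFunction.moebius n : ℤ) : ℂ) * χ (n : ZMod q) *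
          (∑ c' ∈ Finset.Icc 1 (d / n), χ ((c' : ℕ) : ZMod q) * eC (d / n) (-((c' : ℤ) * r)))
        = F n := by
    intro n hn
    obtain ⟨hndvd, -⟩ := Nat.mem_divisors.mp hn
    have hn0 : 0 < n := Nat.pos_of_dvd_of_pos hndvd hd
    by_cases hzero : χ (n : ZMod q) = 0
    · simp [hF, hzero]
    · have hco : Nat.Coprime n q := chi_ne_zero_coprime hzero
      have hnq : n * q ∣ d := Nat.Coprime.mul_dvd_of_dvd_of_dvd hco hndvd hqd
      have hnq' : q * n ∣ d := by rwa [mul_comm] at hnq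
      have hqdn : q ∣ d / n := (Nat.dvd_div_iff_mul_dvd hndvd).mpr (by first | exact hnq | exact hnq')
      have hdn0 : 0 < d / n := Nat.div_pos (Nat.le_of_dvd hd hndvd) hn0
      rw [T_eval hχ hdn0 hqdn r]
      have hdiv : d / n / q = d / q / n := by
        rw [Nat.div_div_eq_div_mul, Nat.div_div_eq_div_mul, mul_comm]
      rw [hdiv, hF]
  -- Step 8: change index set
  rw [step5, Finset.sum_congr rfl step6, Finset.sum_congr rfl step7]
  refine (Finset.sum_subset (Nat.divisors_subset_of_dvd hd.ne' hQd) fun n hn hnQ => ?_).symm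
  obtain ⟨hndvd, -⟩ := Nat.mem_divisors.mp hn
  by_cases hzero : χ (n : ZMod q) = 0
  · simp [hF, hzero]
  · exfalso
    have hco : Nat.Coprime n q := chi_ne_zero_coprime hzero
    have hnq : n * q ∣ d := Nat.Coprime.mul_dvd_of_dvd_of_dvd hco hndvd hqd
    have hnq' : q * n ∣ d := by rwa [mul_comm] at hnq
    exact hnQ (Nat.mem_divisors.mpr ⟨(Nat.dvd_div_iff_mul_dvd hqd).mpr
      (by first | exact hnq | exact hnq'), hQ0.ne'⟩)

open DirichletCharacter in

open DirichletCharacter in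
lemma Lsum_pnat {q : ℕ} [NeZero q] (ψ : DirichletCharacter ℂ q) {s : ℂ} (hs : 1 < s.re) :
    Summable (fun m : ℕ+ => ψ ((m : ℕ) : ZMod q) * ((m : ℕ) : ℂ) ^ (-s)) ∧
    ∑' m : ℕ+, ψ ((m : ℕ) : ZMod q) * ((m : ℕ) : ℂ) ^ (-s)
      = DirichletCharacter.LFunction ψ s := by
  have hsum : Summable (fun n : ℕ => LSeries.term (ψ ·) s n) :=
    DirichletCharacter.LSeriesSummable_of_one_lt_re ψ hs
  have hterm : ∀ m : ℕ+, LSeries.term (ψ ·) s (m : ℕ)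
      = ψ ((m : ℕ) : ZMod q) * ((m : ℕ) : ℂ) ^ (-s) := by
    intro m
    rw [LSeries.term_of_ne_zero m.ne_zero, Complex.cpow_neg, div_eq_mul_inv]
  have hinj : Function.Injective ((↑·) : ℕ+ → ℕ) := fun a b h => PNat.coe_injective h
  constructor
  · exact (hsum.comp_injective hinj).congr fun m => hterm m
  · have hts : ∑' m : ℕ+, LSeries.term (ψ ·) s (m : ℕ) = ∑' n : ℕ, LSeries.term (ψ ·) s n := by
      refine Function.Injective.tsum_eq hinj fun n hn => ?_
      have : n ≠ 0 := by
        intro h0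
        apply hn
        simp [h0, LSeries.term]
      exact ⟨⟨n, Nat.pos_of_ne_zero this⟩, rfl⟩
    rw [← tsum_congr hterm, hts, DirichletCharacter.LFunction_eq_LSeries ψ hs]
    rfl

lemma gdiv_sum {q : ℕ} [NeZero q] (ψ : DirichletCharacter ℂ q) (K : ℂ) {s : ℂ} (hs : 1 < s.re)
    {e : ℕ} (he : 0 < e) :
    Summable (fun r : ℕ+ => (if e ∣ (r : ℕ) then (e : ℂ) *
        ψ (((r : ℕ) / e : ℕ) : ZMod q) * K else 0) * ((r : ℕ) : ℂ) ^ (-s)) ∧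
    ∑' r : ℕ+, (if e ∣ (r : ℕ) then (e : ℂ) *
        ψ (((r : ℕ) / e : ℕ) : ZMod q) * K else 0) * ((r : ℕ) : ℂ) ^ (-s)
      = (e : ℂ) * (e : ℂ) ^ (-s) * K * DirichletCharacter.LFunction ψ s := by
  set g : ℕ+ → ℂ := fun r => (if e ∣ (r : ℕ) then (e : ℂ) *
      ψ (((r : ℕ) / e : ℕ) : ZMod q) * K else 0) * ((r : ℕ) : ℂ) ^ (-s) with hg
  set E : ℕ+ := ⟨e, he⟩ with hE
  set ι : ℕ+ → ℕ+ := fun m => E * m with hι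
  have hinj : Function.Injective ι := fun a b h => mul_left_cancel h
  have hcoe : ∀ m : ℕ+, ((ι m : ℕ)) = e * (m : ℕ) := fun m => rfl
  have hvanish : ∀ r : ℕ+, r ∉ Set.range ι → g r = 0 := by
    intro r hr
    rw [hg]
    simp only
    rw [if_neg, zero_mul]
    intro hdvd
    obtain ⟨m, hm⟩ := hdvd
    have hm0 : 0 < m := by
      rcases Nat.eq_zero_or_pos m with h | h
      · exfalso; exact absurd (hm.trans (by rw [h, mul_zero])) r.ne_zero.elim
      · exact h
    exact hr ⟨⟨m, hm0⟩, PNat.coe_injective (by exact (hcoe _).trans hm.symm)⟩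
  have hcomp : ∀ m : ℕ+, g (ι m) = ((e : ℂ) * (e : ℂ) ^ (-s) * K) *
      (ψ ((m : ℕ) : ZMod q) * ((m : ℕ) : ℂ) ^ (-s)) := by
    intro m
    rw [hg]
    simp only [hcoe]
    rw [if_pos ⟨(m : ℕ), rfl⟩, Nat.mul_div_cancel_left _ he]
    have hsplit : (((e * (m : ℕ) : ℕ)) : ℂ) ^ (-s) = (e : ℂ) ^ (-s) * ((m : ℕ) : ℂ) ^ (-s) := by
      have h : (((e * (m : ℕ) : ℕ) : ℝ) : ℂ) ^ (-s)
          = (((e : ℕ) : ℝ) : ℂ) ^ (-s) * ((((m : ℕ) : ℕ) : ℝ) : ℂ) ^ (-s) := by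
        rw [show ((e * (m : ℕ) : ℕ) : ℝ) = ((e : ℕ) : ℝ) * (((m : ℕ) : ℕ) : ℝ) by push_cast; ring,
          Complex.ofReal_mul, Complex.mul_cpow_ofReal_nonneg (by positivity) (by positivity)]
      simpa using h
    rw [hsplit]
    ring
  obtain ⟨hS, hT⟩ := Lsum_pnat ψ hs
  constructor
  · refine (Function.Injective.summable_iff hinj hvanish).mp ?_
    exact ((hS.mul_left _).congr (fun m => (hcomp m).symm))
  · rw [← Function.Injective.tsum_eq hinj
      (fun r (hr : g r ≠ 0) => by_contra fun hc => hr (hvanish r hc)),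
      tsum_congr hcomp, tsum_mul_left, hT]

lemma En_eq {q d n : ℕ} (hq : 0 < q) (hqd : q ∣ d) (hd : 0 < d) (hn : n ∣ d / q)
    (hn0 : 0 < n) (s : ℂ) :
    ((d / q / n : ℕ) : ℂ) * ((d / q / n : ℕ) : ℂ) ^ (-s)
      = ((q : ℂ) / (d : ℂ)) ^ (s - 1) * (n : ℂ) ^ (s - 1) := by
  have hQ0 : 0 < d / q := Nat.div_pos (Nat.le_of_dvd hd hqd) hq
  obtain ⟨e, hQe⟩ := hn
  have he' : d / q / n = e := by rw [hQe, Nat.mul_div_cancel_left _ hn0]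
  have he0 : 0 < e := by
    rcases Nat.eq_zero_or_pos e with h | h
    · exfalso; rw [h, mul_zero] at hQe; exact hQ0.ne' hQe
    · exact h
  have hqdiv : (q : ℂ) / (d : ℂ) = ((d / q : ℕ) : ℂ)⁻¹ := by
    rw [show (d : ℂ) = (q : ℂ) * ((d / q : ℕ) : ℂ) by
      rw [← Nat.cast_mul, Nat.mul_div_cancel' hqd]]
    exact div_mul_cancel_left₀ (Nat.cast_ne_zero.mpr hq.ne') _
  have hQarg : (((d / q : ℕ) : ℂ)).arg ≠ Real.pi := by
    rw [Complex.natCast_arg]; exact Real.pi_ne_zero.symm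
  rw [he', hqdiv, Complex.inv_cpow _ _ hQarg, ← Complex.cpow_neg]
  have hne : (n : ℂ) ≠ 0 := Nat.cast_ne_zero.mpr hn0.ne'
  have hee : (e : ℂ) ≠ 0 := Nat.cast_ne_zero.mpr he0.ne'
  have hsplitQ : (((d / q : ℕ)) : ℂ) ^ (-(s - 1))
      = (n : ℂ) ^ (-(s - 1)) * (e : ℂ) ^ (-(s - 1)) := by
    have h : (((d / q : ℕ) : ℝ) : ℂ) ^ (-(s - 1))
        = (((n : ℕ) : ℝ) : ℂ) ^ (-(s - 1)) * (((e : ℕ) : ℝ) : ℂ) ^ (-(s - 1)) := by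
      rw [show ((d / q : ℕ) : ℝ) = ((n : ℕ) : ℝ) * ((e : ℕ) : ℝ) by rw [← Nat.cast_mul, hQe],
        Complex.ofReal_mul, Complex.mul_cpow_ofReal_nonneg (by positivity) (by positivity)]
    simpa using h
  rw [hsplitQ]
  have h1 : (e : ℂ) * (e : ℂ) ^ (-s) = (e : ℂ) ^ (-(s - 1)) := by
    rw [show (-(s - 1)) = 1 + (-s) by ring, Complex.cpow_add _ _ hee, Complex.cpow_one]
  have h2 : (n : ℂ) ^ (-(s - 1)) * (n : ℂ) ^ (s - 1) = 1 := by
    rw [← Complex.cpow_add _ _ hne]; simp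
  rw [h1, mul_right_comm, h2, one_mul]

/-- the Dirichlet series of `c_d(r,χ)` when `q ∣ d`. -/
theorem statement_14 (q : ℕ) [NeZero q] (χ : DirichletCharacter ℂ q) (hχ : χ.IsPrimitive)
    (d : ℕ) (hd : 0 < d) (hqd : q ∣ d) (s : ℂ) (hs : 1 < s.re) :
    Summable (fun r : ℕ+ => cdChi χ d (r : ℕ) * ((r : ℕ) : ℂ) ^ (-s)) ∧
    ∑' r : ℕ+, cdChi χ d (r : ℕ) * ((r : ℕ) : ℂ) ^ (-s)
      = (starRingEnd ℂ) (gaussC (conjChar χ)) *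
          DirichletCharacter.LFunction (conjChar χ) s * ((q : ℂ) / (d : ℂ)) ^ (s - 1) *
          ∑ n ∈ (d / q).divisors,
            ((ArithmeticFunction.moebius n : ℤ) : ℂ) * χ (n : ZMod q) * (n : ℂ) ^ (s - 1) := by
  have hq : 0 < q := Nat.pos_of_ne_zero (NeZero.ne q)
  have hQ0 : 0 < d / q := Nat.div_pos (Nat.le_of_dvd hd hqd) hq
  set ψ := conjChar χ with hψ
  set K : ℂ := (starRingEnd ℂ) (gaussC ψ) with hK
  set gterm : ℕ → ℕ+ → ℂ := fun n r => (if d / q / n ∣ (r : ℕ) then ((d / q / n : ℕ) : ℂ) *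
      ψ (((r : ℕ) / (d / q / n) : ℕ) : ZMod q) * K else 0) * ((r : ℕ) : ℂ) ^ (-s) with hgterm
  have hpos : ∀ n ∈ (d / q).divisors, 0 < d / q / n := by
    intro n hn
    obtain ⟨hdvd, -⟩ := Nat.mem_divisors.mp hn
    exact Nat.div_pos (Nat.le_of_dvd hQ0 hdvd) (Nat.pos_of_dvd_of_pos hdvd hQ0)
  have hpoint : ∀ r : ℕ+, cdChi χ d (r : ℕ) * ((r : ℕ) : ℂ) ^ (-s)
      = ∑ n ∈ (d / q).divisors,
          ((ArithmeticFunction.moebius n : ℤ) : ℂ) * χ (n : ZMod q) * gterm n r := by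
    intro r
    rw [cdChi_eq hχ hd hqd, Finset.sum_mul]
    exact Finset.sum_congr rfl fun n _ => by rw [hgterm]; ring
  have hsumm : ∀ n ∈ (d / q).divisors,
      Summable (fun r : ℕ+ => ((ArithmeticFunction.moebius n : ℤ) : ℂ) * χ (n : ZMod q) * gterm n r) := by
    intro n hn
    exact ((gdiv_sum ψ K hs (hpos n hn)).1).mul_left _
  constructor
  · exact (summable_sum hsumm).congr fun r => (hpoint r).symm
  · rw [tsum_congr hpoint, Summable.tsum_finsetSum hsumm]
    have hper : ∀ n ∈ (d / q).divisors,
        ∑' r : ℕ+, ((ArithmeticFunction.moebius n : ℤ) : ℂ) * χ (n : ZMod q) * gterm n r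
        = ((ArithmeticFunction.moebius n : ℤ) : ℂ) * χ (n : ZMod q) *
            (((q : ℂ) / (d : ℂ)) ^ (s - 1) * (n : ℂ) ^ (s - 1) * K *
              DirichletCharacter.LFunction ψ s) := by
      intro n hn
      obtain ⟨hdvd, -⟩ := Nat.mem_divisors.mp hn
      have hn0 : 0 < n := Nat.pos_of_dvd_of_pos hdvd hQ0
      rw [tsum_mul_left, (gdiv_sum ψ K hs (hpos n hn)).2, En_eq hq hqd hd hdvd hn0 s]
    rw [Finset.sum_congr rfl hper, Finset.mul_sum]
    exact Finset.sum_congr rfl fun n _ => by ring
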